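/- If |N| ≥ 4, the CP-majority R_CP does not satisfy Consistency after Indifference (CI). -/

import Mathlib

/-!
Take four distinct players `a, b, c, d` and rank `{a, c}` on top, `{a, d}` at the bottom and all
other coalitions in one middle class. Then `D_ab = {{c}}` and `D_ba = {{d}}`, so `a I_CP b`.
With `Σ = ∅`, CI compares this ranking with the dichotomous one that merges the top two
classes; the merge destroys the only coalition where `a` beats `b` but keeps the one where `b`
beats `a`, so there `b` is strictly CP-better than `a`.
-/

open scoped Classical

noncomputable section

namespace SocialRanking

/-- A coalition: a non-empty subset of the player set `N`. -/
abbrev Coal (N : Type*) : Type _ := {S : Finset N // S.Nonempty}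

/-- A coalitional ranking: a total preorder on the non-empty coalitions of `N`. -/
structure CoalRanking (N : Type*) where
  rel : Coal N → Coal N → Prop
  total : ∀ S T, rel S T ∨ rel T S
  trans : ∀ S T U, rel S T → rel T U → rel S U

variable {N : Type*}

/-- The asymmetric part `≻` of a coalitional ranking. -/
def CoalRanking.strictRel (r : CoalRanking N) (S T : Coal N) : Prop :=
  r.rel S T ∧ ¬ r.rel T S

/-- The symmetric part `∼` of a coalitional ranking. -/
def CoalRanking.simRel (r : CoalRanking N) (S T : Coal N) : Prop :=
  r.rel S T ∧ r.rel T S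

/-- A (candidate) social ranking solution: it assigns to every coalitional ranking a
binary relation on the players. -/
abbrev Sol (N : Type*) : Type _ := CoalRanking N → N → N → Prop

/-- A social ranking solution yields a *total* relation on every coalitional ranking. -/
def IsTotalSol (R : Sol N) : Prop := ∀ r i j, R r i j ∨ R r j i

/-- The asymmetric part `P^≿` of a social ranking. -/
def Psol (R : Sol N) (r : CoalRanking N) (i j : N) : Prop := R r i j ∧ ¬ R r j i

/-- The symmetric part `I^≿` of a social ranking. -/
def Isol (R : Sol N) (r : CoalRanking N) (i j : N) : Prop := R r i j ∧ R r j i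

/-- `S` belongs to the worst equivalence class of `r`. -/
def worst (r : CoalRanking N) (S : Coal N) : Prop := ∀ T, r.rel T S

/-- `S` belongs to the best equivalence class of `r`. -/
def best (r : CoalRanking N) (S : Coal N) : Prop := ∀ T, r.rel S T

/-- `S` belongs to the second-worst equivalence class of `r`. -/
def secondWorst (r : CoalRanking N) (S : Coal N) : Prop :=
  ¬ worst r S ∧ ∀ T, ¬ worst r T → r.rel T S

section Defs

variable [DecidableEq N] [Fintype N]

/-- The coalition `S ∪ {i}`. -/
def ins (i : N) (S : Finset N) : Coal N := ⟨insert i S, Finset.insert_nonempty i S⟩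

/-- `D_{ij}(≿)`: the coalitions `S ⊆ N \ {i,j}` with `S ∪ {i} ≻ S ∪ {j}`. -/
def Dset (r : CoalRanking N) (i j : N) : Finset (Finset N) :=
  Finset.univ.filter fun S => i ∉ S ∧ j ∉ S ∧ r.strictRel (ins i S) (ins j S)

/-- The equivalence class of `S` in `r`. -/
def classOf (r : CoalRanking N) (S : Coal N) : Finset (Coal N) :=
  Finset.univ.filter fun T => r.simRel T S

/-- The (0-indexed) level of `S`: the number of equivalence classes strictly above `S`.
Thus the `k`-th equivalence class `Σ_k` of the quotient order (1-indexed, from best to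
worst) is `{S | level r S = k - 1}`. -/
def level (r : CoalRanking N) (S : Coal N) : ℕ :=
  ((Finset.univ.filter fun T => r.strictRel T S).image (classOf r)).card

/-- The number `l` of equivalence classes of `r`. -/
def numClasses (r : CoalRanking N) : ℕ :=
  (Finset.univ.image (classOf r)).card

/-- `theta r i k` is the number of coalitions containing `i` in the `(k+1)`-st
equivalence class of `r`, i.e. the `(k+1)`-st entry of the vector `θ^≿(i)`. -/
def theta (r : CoalRanking N) (i : N) (k : ℕ) : ℕ :=
  (Finset.univ.filter fun S : Coal N => level r S = k ∧ i ∈ S.1).card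

/-- `Mmat r i s k` is the number of coalitions of size `s` containing `i` in the
`(k+1)`-st equivalence class of `r` (the entry `M^{≿,i}_{s,k+1}`). -/
def Mmat (r : CoalRanking N) (i : N) (s k : ℕ) : ℕ :=
  (Finset.univ.filter fun S : Coal N => S.1.card = s ∧ level r S = k ∧ i ∈ S.1).card

/-- The CP-majority solution: `i R_CP^≿ j ⇔ |D_{ij}(≿)| ≥ |D_{ji}(≿)|`. -/
def cpSol : Sol N := fun r i j => (Dset r j i).card ≤ (Dset r i j).card

/-- The lexicographic excellence (lex-cel) solution: `i R_le^≿ j ⇔ θ^≿(i) ≥_L θ^≿(j)`. -/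
def lexcelSol : Sol N := fun r i j =>
  (∀ k, theta r i k = theta r j k) ∨
    ∃ s, (∀ k, k < s → theta r i k = theta r j k) ∧ theta r j s < theta r i s

/-- The dual-lex solution: `i R_d^≿ j ⇔ θ^≿(i) ≥_{L*} θ^≿(j)`. -/
def duallexSol : Sol N := fun r i j =>
  (∀ k, theta r i k = theta r j k) ∨
    ∃ s, (∀ k, s < k → theta r i k = theta r j k) ∧ theta r i s < theta r j s

/-- The `L⁽¹⁾` solution. -/
def L1Sol : Sol N := fun r i j =>
  (∀ s k, Mmat r i s k = Mmat r j s k) ∨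
    ∃ shat khat : ℕ, 1 ≤ shat ∧ shat ≤ Fintype.card N ∧ khat + 1 < numClasses r ∧
      (∀ s k, k < khat → Mmat r i s k = Mmat r j s k) ∧
      (∀ s, s < shat → Mmat r i s khat = Mmat r j s khat) ∧
      Mmat r j shat khat < Mmat r i shat khat

/-- The `L⁽¹⁾_*` solution. -/
def L1starSol : Sol N := fun r i j =>
  (∀ s k, Mmat r i s k = Mmat r j s k) ∨
    ∃ shat khat : ℕ, 1 ≤ shat ∧ shat ≤ Fintype.card N ∧ 1 ≤ khat ∧ khat < numClasses r ∧
      (∀ s k, khat < k → Mmat r i s k = Mmat r j s k) ∧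
      (∀ s, s < shat → Mmat r i s khat = Mmat r j s khat) ∧
      Mmat r i shat khat < Mmat r j shat khat

/-- Strict Desirability (SDes). -/
def SDes (R : Sol N) : Prop :=
  ∀ (r : CoalRanking N) (i j : N),
    (∀ S : Finset N, i ∉ S → j ∉ S → r.rel (ins i S) (ins j S)) →
    (∃ T : Finset N, i ∉ T ∧ j ∉ T ∧ r.strictRel (ins i T) (ins j T)) →
    Psol R r i j

/-- Symmetry (Sym). -/
def SymAx (R : Sol N) : Prop :=
  ∀ (r : CoalRanking N) (i j : N),
    (∀ S : Finset N, i ∉ S → j ∉ S → r.simRel (ins i S) (ins j S)) →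
    Isol R r i j

/-- Neutrality (Neu). -/
def Neu (R : Sol N) : Prop :=
  ∀ (r r' : CoalRanking N) (i j : N),
    (∀ S : Finset N, i ∉ S → j ∉ S →
      (r.rel (ins i S) (ins j S) ↔ r'.rel (ins j S) (ins i S))) →
    (R r i j ↔ R r' j i)

/-- Equality of Coalitions (EC). -/
def EC (R : Sol N) : Prop :=
  ∀ (r r' : CoalRanking N) (i j : N)
    (π : {S : Finset N // i ∉ S ∧ j ∉ S} ≃ {S : Finset N // i ∉ S ∧ j ∉ S}),
    (∀ S : {S : Finset N // i ∉ S ∧ j ∉ S},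
      (r.rel (ins i S.1) (ins j S.1) ↔ r'.rel (ins i (π S).1) (ins j (π S).1))) →
    (R r i j ↔ R r' i j)

/-- Coalitional Anonymity (CA). -/
def CA (R : Sol N) : Prop :=
  ∀ (r r' : CoalRanking N) (i j : N)
    (π : {S : Finset N // i ∉ S ∧ j ∉ S} ≃ {S : Finset N // i ∉ S ∧ j ∉ S}),
    (∀ S T : {S : Finset N // i ∉ S ∧ j ∉ S},
      (r.rel (ins i S.1) (ins j T.1) ↔ r'.rel (ins i (π S).1) (ins j T.1))) →
    (R r i j ↔ R r' i j)

/-- Per-size Coalitional Anonymity (PCA). -/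
def PCA (R : Sol N) : Prop :=
  ∀ (r r' : CoalRanking N) (i j : N)
    (π : {S : Finset N // i ∉ S ∧ j ∉ S} ≃ {S : Finset N // i ∉ S ∧ j ∉ S}),
    (∀ S : {S : Finset N // i ∉ S ∧ j ∉ S}, (π S).1.card = S.1.card) →
    (∀ S T : {S : Finset N // i ∉ S ∧ j ∉ S}, S.1.card = T.1.card →
      (r.rel (ins i S.1) (ins j T.1) ↔ r'.rel (ins i (π S).1) (ins j T.1))) →
    (R r i j ↔ R r' i j)

/-- Consistency After Tiebreaks (CAT): viewing coalitional rankings as sets of ordered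
pairs, `B ⊆ ≿ ∩ ≿'` is removed from both `≿` and `≿'`, the results `rB = ≿ \ B` and
`r'B = ≿' \ B` being again total preorders. -/
def CAT (R : Sol N) : Prop :=
  ∀ (r r' rB r'B : CoalRanking N) (i j : N) (B : Coal N → Coal N → Prop),
    Isol R r i j → Isol R r' i j →
    (∀ S T, B S T → r.rel S T ∧ r'.rel S T) →
    (∀ S T, rB.rel S T ↔ (r.rel S T ∧ ¬ B S T)) →
    (∀ S T, r'B.rel S T ↔ (r'.rel S T ∧ ¬ B S T)) →
    (R rB i j ↔ R r'B i j)

/-- Independence from the Worst Set (IWS): if `r` has at least two equivalence classes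
and `i P^r j`, then `i P^{r'} j` for every coalitional ranking `r'` obtained from `r` by
replacing the worst equivalence class by an ordered partition of it (equivalently, `r'`
agrees with `r` on every pair of coalitions not both in the worst class of `r`). -/
def IWS (R : Sol N) : Prop :=
  ∀ (r r' : CoalRanking N) (i j : N),
    (∃ S T, r.strictRel S T) →
    Psol R r i j →
    (∀ S T : Coal N, ¬(worst r S ∧ worst r T) → (r.rel S T ↔ r'.rel S T)) →
    Psol R r' i j

/-- Independence from the Best Set (IBS). -/
def IBS (R : Sol N) : Prop :=
  ∀ (r r' : CoalRanking N) (i j : N),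
    (∃ S T, r.strictRel S T) →
    Psol R r i j →
    (∀ S T : Coal N, ¬(best r S ∧ best r T) → (r.rel S T ↔ r'.rel S T)) →
    Psol R r' i j

/-- A dichotomous coalitional ranking: exactly two equivalence classes. -/
def dichotomous (r : CoalRanking N) : Prop :=
  (∃ S T, r.strictRel S T) ∧ ∀ S, best r S ∨ worst r S

/-- `i` `k`-dominates `j` strictly: `i P_k^≿ j`. -/
def kDomS (r : CoalRanking N) (i j : N) (k : ℕ) : Prop :=
  (∀ S : Finset N, i ∉ S → j ∉ S → S.card = k → r.rel (ins i S) (ins j S)) ∧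
  ∃ S : Finset N, i ∉ S ∧ j ∉ S ∧ S.card = k ∧ r.strictRel (ins i S) (ins j S)

/-- `i` and `j` are `k`-indifferent: `i I_k^≿ j`. -/
def kIndiff (r : CoalRanking N) (i j : N) (k : ℕ) : Prop :=
  ∀ S : Finset N, i ∉ S → j ∉ S → S.card = k → r.simRel (ins i S) (ins j S)

/-- `KP_{ij}^≿ = {k ∈ {0,…,n-2} : i P_k^≿ j}`. -/
def KP (r : CoalRanking N) (i j : N) : Finset ℕ :=
  (Finset.range (Fintype.card N - 1)).filter fun k => kDomS r i j k

/-- `k`-Desirability on Dichotomous rankings (k-DD). -/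
def kDD (R : Sol N) : Prop :=
  ∀ (r : CoalRanking N) (i j : N),
    dichotomous r →
    (∀ k, k < Fintype.card N - 1 → kDomS r i j k ∨ kDomS r j i k ∨ kIndiff r i j k) →
    ∀ (h1 : (KP r i j).Nonempty) (h2 : (KP r j i).Nonempty),
      (KP r i j).min' h1 < (KP r j i).min' h2 → Psol R r i j

/-- Consistency after Indifference (CI): `Sig` is a proper subset of the worst class
`Σ_l` of `r` (which has `l ≥ 2` classes) and `i I^r j`; `r'` is the ranking with
quotient order `Σ_1 ≻' … ≻' Σ_{l-1} ∪ Sig ≻' Σ_l \ Sig`, and `r''` the dichotomous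
ranking with quotient order `Σ_1 ∪ … ∪ Σ_{l-1} ∪ Sig ≻'' Σ_l \ Sig`. -/
def CI (R : Sol N) : Prop :=
  ∀ (r r' r'' : CoalRanking N) (i j : N) (Sig : Set (Coal N)),
    (∃ S T, r.strictRel S T) →
    Isol R r i j →
    (∀ S ∈ Sig, worst r S) →
    (∃ S, worst r S ∧ S ∉ Sig) →
    (∀ S T, r'.rel S T ↔
      ((worst r T ∧ T ∉ Sig) ∨
        (¬(worst r S ∧ S ∉ Sig) ∧ (r.rel S T ∨ secondWorst r T ∨ T ∈ Sig)))) →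
    (∀ S T, r''.rel S T ↔ ((worst r T ∧ T ∉ Sig) ∨ ¬(worst r S ∧ S ∉ Sig))) →
    (R r' i j ↔ R r'' i j)

/-- `r'` is `i`-improving and `j`-invariant with respect to `r`: the only difference
between the two rankings is that the coalitions in some non-empty family `E` (all
containing `i` but not `j`) are strictly better ranked in `r'` than in `r`, while all
other coalitions keep their ranking positions. -/
def Improving (r r' : CoalRanking N) (i j : N) : Prop :=
  ∃ E : Set (Coal N), E.Nonempty ∧
    (∀ S ∈ E, i ∈ S.1 ∧ j ∉ S.1) ∧
    (∀ S T : Coal N, S ∉ E → T ∉ E → (r.rel S T ↔ r'.rel S T)) ∧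
    (∀ S ∈ E, ∀ T : Coal N, (r.rel S T → r'.rel S T) ∧ (r'.rel T S → r.rel T S)) ∧
    (∀ S ∈ E, ∃ T : Coal N, r.rel T S ∧ ¬ r'.rel T S)

/-- Monotonicity (M). -/
def MonoAx (R : Sol N) : Prop :=
  ∀ (r r' : CoalRanking N) (i j : N),
    Isol R r i j → Improving r r' i j → Psol R r' i j

end Defs

theorem rel_iff_worst_or_secondWorst (r : CoalRanking N) (S T : Coal N) :
    r.rel S T ↔ worst r T ∨ ¬ worst r S ∧ (r.rel S T ∨ secondWorst r T) := by
  constructor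
  · intro hST
    by_cases hT : worst r T
    · exact Or.inl hT
    · exact Or.inr ⟨fun hS => hT fun U => r.trans U S T (hS U) hST, Or.inl hST⟩
  · rintro (hT | ⟨hS, hST | hT⟩)
    · exact hT S
    · exact hST
    · exact hT.2 S hS

/-- With `Σ = ∅` the ranking `≿′` of CI is `≿` itself. -/
theorem CI.iff_merge_above_worst {R : Sol N} (hR : CI R) {r r'' : CoalRanking N} {i j : N}
    (hnt : ∃ S T, r.strictRel S T) (hw : ∃ S, worst r S)
    (h'' : ∀ S T, r''.rel S T ↔ worst r T ∨ ¬ worst r S) (hI : Isol R r i j) :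
    R r i j ↔ R r'' i j :=
  hR r r r'' i j ∅ hnt hI (by simp) (by simpa using hw)
    (by simpa using rel_iff_worst_or_secondWorst r) (by simpa using h'')

namespace CoalRanking

def ofUtility (u : Coal N → ℕ) : CoalRanking N where
  rel S T := u T ≤ u S
  total S T := le_total (u T) (u S)
  trans _ _ _ hST hTU := hTU.trans hST

variable {u : Coal N → ℕ}

theorem ofUtility_rel {S T : Coal N} : (ofUtility u).rel S T ↔ u T ≤ u S := Iff.rfl

theorem ofUtility_strictRel {S T : Coal N} : (ofUtility u).strictRel S T ↔ u T < u S :=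
  lt_iff_le_not_ge.symm

theorem worst_ofUtility_iff (h₀ : ∃ S₀, u S₀ = 0) {S : Coal N} :
    worst (ofUtility u) S ↔ u S = 0 := by
  obtain ⟨S₀, hS₀⟩ := h₀
  refine ⟨fun hS => Nat.eq_zero_of_le_zero (hS₀ ▸ hS S₀), fun hS T => ?_⟩
  rw [ofUtility_rel, hS]
  exact Nat.zero_le _

end CoalRanking

open CoalRanking Finset

section

variable [DecidableEq N]

theorem Dset_ofUtility [Fintype N] (u : Coal N → ℕ) (i j : N) :
    Dset (ofUtility u) i j = univ.filter fun S => i ∉ S ∧ j ∉ S ∧ u (ins j S) < u (ins i S) := by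
  simp only [Dset, ofUtility_strictRel]

theorem ins_inj {i : N} {S T : Finset N} (hS : i ∉ S) (hT : i ∉ T) :
    ins i S = ins i T ↔ S = T := by
  rw [ins, ins, Subtype.mk.injEq]
  exact ⟨fun h => by rw [← erase_insert hS, h, erase_insert hT], congrArg _⟩

theorem ins_ne_ins {i j : N} {S : Finset N} (hij : i ≠ j) (hS : i ∉ S) (T : Finset N) :
    ins j S ≠ ins i T := fun h =>
  (mem_insert.1 (h ▸ mem_insert_self i T : i ∈ (ins j S).1)).elim hij hS

variable {a b c d : N}

def threeLevel (a c d : N) (S : Coal N) : ℕ :=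
  if S = ins a {c} then 2 else if S = ins a {d} then 0 else 1

theorem threeLevel_ins_self (hac : a ≠ c) (had : a ≠ d) {S : Finset N} (hS : a ∉ S) :
    threeLevel a c d (ins a S) = if S = {c} then 2 else if S = {d} then 0 else 1 := by
  simp only [threeLevel, ins_inj hS (notMem_singleton.2 hac), ins_inj hS (notMem_singleton.2 had)]

theorem threeLevel_ins_of_notMem (hab : a ≠ b) {S : Finset N} (hS : a ∉ S) :
    threeLevel a c d (ins b S) = 1 := by
  simp only [threeLevel, ins_ne_ins hab hS, if_false]

variable [Fintype N]

theorem Dset_threeLevel (hab : a ≠ b) (hac : a ≠ c) (had : a ≠ d) (hbc : b ≠ c) :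
    Dset (ofUtility (threeLevel a c d)) a b = {{c}} := by
  ext S
  simp only [Dset_ofUtility, mem_filter, mem_univ, true_and, mem_singleton]
  constructor
  · rintro ⟨ha, -, hlt⟩
    rw [threeLevel_ins_self hac had ha, threeLevel_ins_of_notMem hab ha] at hlt
    split_ifs at hlt with hc
    exacts [hc, absurd hlt (by omega), absurd hlt (by omega)]
  · rintro rfl
    have ha : a ∉ ({c} : Finset N) := notMem_singleton.2 hac
    refine ⟨ha, notMem_singleton.2 hbc, ?_⟩
    rw [threeLevel_ins_self hac had ha, threeLevel_ins_of_notMem hab ha, if_pos rfl]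
    omega

theorem Dset_threeLevel_symm (hab : a ≠ b) (hac : a ≠ c) (had : a ≠ d) (hbd : b ≠ d)
    (hcd : c ≠ d) : Dset (ofUtility (threeLevel a c d)) b a = {{d}} := by
  ext S
  simp only [Dset_ofUtility, mem_filter, mem_univ, true_and, mem_singleton]
  constructor
  · rintro ⟨-, ha, hlt⟩
    rw [threeLevel_ins_self hac had ha, threeLevel_ins_of_notMem hab ha] at hlt
    split_ifs at hlt with hc hd
    exacts [absurd hlt (by omega), hd, absurd hlt (by omega)]
  · rintro rfl
    have ha : a ∉ ({d} : Finset N) := notMem_singleton.2 had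
    refine ⟨notMem_singleton.2 hbd, ha, ?_⟩
    rw [threeLevel_ins_self hac had ha, threeLevel_ins_of_notMem hab ha,
      if_neg (singleton_inj.not.2 hcd.symm), if_pos rfl]
    omega

theorem Dset_merge_threeLevel (hab : a ≠ b) :
    Dset (ofUtility fun S => min (threeLevel a c d S) 1) a b = ∅ := by
  ext S
  simp only [Dset_ofUtility, mem_filter, mem_univ, true_and, notMem_empty, iff_false]
  rintro ⟨ha, -, hlt⟩
  rw [threeLevel_ins_of_notMem hab ha] at hlt
  omega

theorem Dset_merge_threeLevel_symm (hab : a ≠ b) :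
    Dset (ofUtility fun S => min (threeLevel a c d S) 1) b a =
      Dset (ofUtility (threeLevel a c d)) b a := by
  simp only [Dset_ofUtility]
  refine filter_congr fun S _ => and_congr_right fun _ => and_congr_right fun ha => ?_
  rw [threeLevel_ins_of_notMem hab ha]
  omega

theorem not_CI_cpSol_of_pairwise_ne (hab : a ≠ b) (hac : a ≠ c) (had : a ≠ d) (hbc : b ≠ c)
    (hbd : b ≠ d) (hcd : c ≠ d) : ¬ CI (cpSol : Sol N) := by
  intro hCI
  have hd : threeLevel a c d (ins a {d}) = 0 := by
    rw [threeLevel_ins_self hac had (notMem_singleton.2 had),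
      if_neg (singleton_inj.not.2 hcd.symm), if_pos rfl]
  have hw : ∃ S, threeLevel a c d S = 0 := ⟨_, hd⟩
  have hnt : ∃ S T, (ofUtility (threeLevel a c d)).strictRel S T :=
    ⟨ins b ∅, ins a {d}, ofUtility_strictRel.2 (by
      rw [hd, threeLevel_ins_of_notMem hab (notMem_empty a)]
      omega)⟩
  have hI : Isol cpSol (ofUtility (threeLevel a c d)) a b := by
    simp only [Isol, cpSol, Dset_threeLevel hab hac had hbc,
      Dset_threeLevel_symm hab hac had hbd hcd, card_singleton, le_refl, and_self]
  have h'' : ∀ S T, (ofUtility fun S => min (threeLevel a c d S) 1).rel S T ↔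
      worst (ofUtility (threeLevel a c d)) T ∨ ¬ worst (ofUtility (threeLevel a c d)) S := by
    intro S T
    rw [ofUtility_rel, worst_ofUtility_iff hw, worst_ofUtility_iff hw]
    omega
  have hcp := (hCI.iff_merge_above_worst hnt ⟨_, (worst_ofUtility_iff hw).2 hd⟩ h'' hI).1 hI.1
  rw [cpSol, Dset_merge_threeLevel hab, Dset_merge_threeLevel_symm hab,
    Dset_threeLevel_symm hab hac had hbd hcd] at hcp
  simp at hcp

end

section Defs

variable [DecidableEq N] [Fintype N]

/-- if `|N| ≥ 4`, the CP-majority does not satisfy Consistency after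
Indifference. -/
theorem stmt19 (h : 4 ≤ Fintype.card N) : ¬ CI (cpSol : Sol N) := by
  obtain ⟨f⟩ := Function.Embedding.nonempty_of_card_le (α := Fin 4) (by simpa using h)
  exact not_CI_cpSol_of_pairwise_ne (a := f 0) (b := f 1) (c := f 2) (d := f 3)
    (by simp) (by simp) (by simp) (by simp) (by simp) (by simp)

end Defs

end SocialRanking
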